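/- Let S be a finite set of K states, M ≥ 1, q = (q₁,…,q_M) nonnegative weights, W_{x,y} : {1,…,M}² → ℝ bounded, Φ_{x,y} : ℝ → ℝ Lipschitz continuous, bounded, and nonnegative for each pair of distinct states (x,y), and ψ : S×S → S given. Then for every initial condition (P^1(0),…,P^M(0)) with each P^j(0) in the probability simplex Δ = {P ∈ ℝ^S : P_x ≥ 0, Σ_x P_x = 1}, the macroscale generalized Kolmogorov equations d/dt P_x^j = Σ_{y≠x} Φ_{y,x}((1/M) Σ_{k=1}^M q_k W_{y,x}(j,k) P_{ψ(y,x)}^k) P_y^j − Σ_{y≠x} Φ_{x,y}((1/M) Σ_{k=1}^M q_k W_{x,y}(j,k) P_{ψ(x,y)}^k) P_x^j, for j = 1,…,M and x ∈ S, have a unique solution defined for all t ≥ 0, and each P^j(t) remains in Δ for all t ≥ 0. -/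

import Mathlib

/-!
The vector field of the equations is locally Lipschitz, which gives uniqueness. For existence,
precompose the field with the coordinatewise projection onto `[0, 1]`: the modified field is
globally Lipschitz and bounded, so Picard–Lindelöf gives solutions on every `[0, n]`, and these
glue to a solution on `[0, ∞)`. The modified field conserves the total mass of every patch, and
since the rates are nonnegative it never pushes a negative coordinate further down; hence its
solution stays in `Δ^M`, where the projection is the identity, so it solves the original equations.
-/

open Set

/-- The macroscale generalized Kolmogorov equations for `M` patches: the transition rate
from `x` to `y` in patch `j` is `Φ_{x,y}((1/M) Σ_k q_k W_{x,y}(j,k) P^k_{ψ(x,y)})`. -/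
def IsMacroGKESolution {S : Type*} [Fintype S] [DecidableEq S] {M : ℕ}
    (q : Fin M → ℝ) (W : S → S → Fin M → Fin M → ℝ) (Φ : S → S → ℝ → ℝ)
    (ψ : S → S → S) (P : ℝ → Fin M → S → ℝ) : Prop :=
  ∀ t ∈ Ici (0:ℝ), ∀ (j : Fin M) (x : S),
    HasDerivWithinAt (fun s => P s j x)
      ((∑ y ∈ Finset.univ.erase x,
          Φ y x ((1 / (M : ℝ)) * ∑ k, q k * W y x j k * P t k (ψ y x)) * P t j y)
        - ∑ y ∈ Finset.univ.erase x,
          Φ x y ((1 / (M : ℝ)) * ∑ k, q k * W x y j k * P t k (ψ x y)) * P t j x)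
      (Ici 0) t

open Filter Topology NNReal

section LocallyLipschitz

variable {α : Type*} [PseudoEMetricSpace α]

theorem LocallyLipschitz.mul' {𝔸 : Type*} [NormedRing 𝔸] [NormedAlgebra ℝ 𝔸] {f g : α → 𝔸}
    (hf : LocallyLipschitz f) (hg : LocallyLipschitz g) :
    LocallyLipschitz fun x => f x * g x :=
  (contDiff_mul (𝕜 := ℝ) (n := 1)).locallyLipschitz.comp (hf.prodMk hg)

theorem LocallyLipschitz.sum {ι E : Type*} [SeminormedAddCommGroup E] (s : Finset ι)
    {f : ι → α → E} (hf : ∀ i ∈ s, LocallyLipschitz (f i)) :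
    LocallyLipschitz fun x => ∑ i ∈ s, f i x := by
  classical
  induction s using Finset.induction_on with
  | empty => simpa using LocallyLipschitz.const (0 : E)
  | insert i s hi ih =>
    simp only [Finset.sum_insert hi]
    exact (hf i (s.mem_insert_self i)).add (ih fun k hk => hf k (Finset.mem_insert_of_mem hk))

theorem LocallyLipschitz.pi {ι : Type*} [Fintype ι] {β : ι → Type*}
    [∀ i, PseudoEMetricSpace (β i)] {f : α → ∀ i, β i}
    (hf : ∀ i, LocallyLipschitz fun x => f x i) : LocallyLipschitz f := by
  intro x
  choose K t ht hK using fun i => hf i x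
  refine ⟨∑ i, K i, ⋂ i, t i, iInter_mem.2 ht, fun y hy z hz => edist_pi_le_iff.2 fun i => ?_⟩
  calc edist (f y i) (f z i) ≤ K i * edist y z := hK i (mem_iInter.1 hy i) (mem_iInter.1 hz i)
    _ ≤ (∑ i, K i : ℝ≥0) * edist y z := by
      gcongr
      exact Finset.single_le_sum (fun _ _ => bot_le) (Finset.mem_univ i)

end LocallyLipschitz

section AutonomousODE

variable {E : Type*} [NormedAddCommGroup E] [NormedSpace ℝ E]

theorem LocallyLipschitz.eqOn_Ici_of_hasDerivWithinAt {v : E → E} (hv : LocallyLipschitz v)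
    {f g : ℝ → E} (hf : ∀ t ∈ Ici (0:ℝ), HasDerivWithinAt f (v (f t)) (Ici 0) t)
    (hg : ∀ t ∈ Ici (0:ℝ), HasDerivWithinAt g (v (g t)) (Ici 0) t) (h0 : f 0 = g 0) :
    EqOn f g (Ici 0) := by
  intro T hT
  have hcf : ContinuousOn f (Icc 0 T) := fun t ht =>
    (hf t ht.1).continuousWithinAt.mono Icc_subset_Ici_self
  have hcg : ContinuousOn g (Icc 0 T) := fun t ht =>
    (hg t ht.1).continuousWithinAt.mono Icc_subset_Ici_self
  -- `v` is Lipschitz on the compact set swept out by both trajectories up to time `T`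
  obtain ⟨K, hK⟩ := hv.locallyLipschitzOn.exists_lipschitzOnWith_of_compact
    ((isCompact_Icc.image_of_continuousOn hcf).union (isCompact_Icc.image_of_continuousOn hcg))
  exact ODE_solution_unique_of_mem_Icc_right (v := fun _ => v) (fun _ _ => hK) hcf
    (fun t ht => (hf t ht.1).mono (Ici_subset_Ici.2 ht.1))
    (fun t ht => Or.inl (mem_image_of_mem f (Ico_subset_Icc_self ht))) hcg
    (fun t ht => (hg t ht.1).mono (Ici_subset_Ici.2 ht.1))
    (fun t ht => Or.inr (mem_image_of_mem g (Ico_subset_Icc_self ht))) h0 ⟨hT, le_rfl⟩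

theorem exists_forall_hasDerivWithinAt_Ici_of_lipschitzWith [CompleteSpace E] {v : E → E}
    {K : ℝ≥0} {C : ℝ} (hv : LipschitzWith K v) (hC : ∀ x, ‖v x‖ ≤ C) (x₀ : E) :
    ∃ f : ℝ → E, f 0 = x₀ ∧ ∀ t ∈ Ici (0:ℝ), HasDerivWithinAt f (v (f t)) (Ici 0) t := by
  have hlocal (n : ℕ) : ∃ f : ℝ → E, f 0 = x₀ ∧
      ∀ t ∈ Icc (0:ℝ) n, HasDerivWithinAt f (v (f t)) (Icc 0 n) t :=
    (IsPicardLindelof.of_time_independent (t₀ := ⟨0, le_rfl, n.cast_nonneg⟩)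
      (a := C.toNNReal * n) (r := 0) (fun x _ => (hC x).trans (Real.le_coe_toNNReal C))
      hv.lipschitzOnWith (by simp)).exists_eq_forall_mem_Icc_hasDerivWithinAt₀
  choose f hf0 hf using hlocal
  have hcont (n : ℕ) : ContinuousOn (f n) (Icc 0 n) := fun t ht => (hf n t ht).continuousWithinAt
  have hright (n : ℕ) : ∀ t ∈ Ico (0:ℝ) n, HasDerivWithinAt (f n) (v (f n t)) (Ici t) t :=
    fun t ht => (hf n t (Ico_subset_Icc_self ht)).mono_of_mem_nhdsWithin (Icc_mem_nhdsGE_of_mem ht)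
  have hagree {m n : ℕ} (hmn : m ≤ n) : EqOn (f m) (f n) (Icc 0 m) := by
    have hmn' : (m : ℝ) ≤ n := Nat.cast_le.2 hmn
    exact ODE_solution_unique (v := fun _ => v) (fun _ => hv) (hcont m) (hright m)
      ((hcont n).mono (Icc_subset_Icc_right hmn'))
      (fun t ht => hright n t ⟨ht.1, ht.2.trans_le hmn'⟩)
      (by rw [hf0, hf0])
  have hglue (n : ℕ) : EqOn (fun t => f (⌊t⌋₊ + 1) t) (f n) (Icc 0 n) := fun t ht => by
    rcases le_total (⌊t⌋₊ + 1) n with h | h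
    · exact hagree h ⟨ht.1, by exact_mod_cast (Nat.lt_floor_add_one t).le⟩
    · exact (hagree h ht).symm
  refine ⟨fun t => f (⌊t⌋₊ + 1) t, hf0 _, fun t ht => ?_⟩
  have htn : t < ((⌊t⌋₊ + 1 : ℕ) : ℝ) := by exact_mod_cast Nat.lt_floor_add_one t
  have hnhds : Icc (0:ℝ) (⌊t⌋₊ + 1 : ℕ) ∈ 𝓝[Ici 0] t := inter_mem_nhdsWithin _ (Iic_mem_nhds htn)
  exact ((hf _ t ⟨ht, htn.le⟩).mono_of_mem_nhdsWithin hnhds).congr_of_eventuallyEq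
    (eventually_of_mem hnhds (hglue _)) rfl

theorem LocallyLipschitz.exists_forall_hasDerivWithinAt_Ici_comp [CompleteSpace E] {F : E → E}
    (hF : LocallyLipschitz F) {π : E → E} {K : ℝ≥0} (hπ : LipschitzWith K π) {s : Set E}
    (hs : IsCompact s) (hπs : ∀ x, π x ∈ s) (x₀ : E) :
    ∃ f : ℝ → E, f 0 = x₀ ∧ ∀ t ∈ Ici (0:ℝ), HasDerivWithinAt f (F (π (f t))) (Ici 0) t := by
  obtain ⟨K', hK'⟩ := hF.locallyLipschitzOn.exists_lipschitzOnWith_of_compact hs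
  obtain ⟨C, hC⟩ := hs.exists_bound_of_continuousOn hF.continuous.continuousOn
  exact exists_forall_hasDerivWithinAt_Ici_of_lipschitzWith
    (lipschitzOnWith_univ.1 (hK'.comp hπ.lipschitzOnWith fun x _ => hπs x))
    (fun x => hC _ (hπs x)) x₀

end AutonomousODE

theorem nonneg_of_hasDerivWithinAt_of_neg_imp_nonneg {f f' : ℝ → ℝ}
    (hf : ∀ t ∈ Ici (0:ℝ), HasDerivWithinAt f (f' t) (Ici 0) t) (h0 : 0 ≤ f 0)
    (hf' : ∀ t ∈ Ici (0:ℝ), f t < 0 → 0 ≤ f' t) : ∀ t ∈ Ici (0:ℝ), 0 ≤ f t := by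
  intro T hT
  by_contra! hfT
  have hcont : ContinuousOn f (Icc 0 T) := fun t ht =>
    (hf t ht.1).continuousWithinAt.mono Icc_subset_Ici_self
  set A := Icc 0 T ∩ f ⁻¹' Ici 0
  have hbdd : BddAbove A := bddAbove_Icc.mono inter_subset_left
  -- the last time before `T` at which `f` is nonnegative
  set s := sSup A
  have hsA : s ∈ A := (hcont.preimage_isClosed_of_isClosed isClosed_Icc isClosed_Ici).csSup_mem
    ⟨0, ⟨le_rfl, hT⟩, h0⟩ hbdd
  have hneg : ∀ t ∈ Ioo s T, f t < 0 := fun t ht => by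
    by_contra! h
    exact (le_csSup hbdd ⟨⟨hsA.1.1.trans ht.1.le, ht.2.le⟩, h⟩).not_gt ht.1
  have hmono : MonotoneOn f (Icc s T) := by
    refine monotoneOn_of_hasDerivWithinAt_nonneg (f' := f') (convex_Icc s T)
      (hcont.mono (Icc_subset_Icc_left hsA.1.1)) (fun t ht => ?_) (fun t ht => ?_)
    · rw [interior_Icc] at ht ⊢
      exact (hf t (hsA.1.1.trans ht.1.le)).mono fun u hu => hsA.1.1.trans hu.1.le
    · rw [interior_Icc] at ht
      exact hf' t (hsA.1.1.trans ht.1.le) (hneg t ht)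
  exact hfT.not_ge (le_trans hsA.2 (hmono ⟨le_rfl, hsA.1.2⟩ ⟨hsA.1.2, le_rfl⟩ hsA.1.2))

section UnitClamp

variable {ι κ : Type*}

noncomputable def unitClamp (p : ι → κ → ℝ) : ι → κ → ℝ :=
  fun i k => projIcc 0 1 zero_le_one (p i k)

theorem lipschitzWith_unitClamp [Fintype ι] [Fintype κ] :
    LipschitzWith 1 (unitClamp : (ι → κ → ℝ) → ι → κ → ℝ) :=
  LipschitzWith.of_dist_le_mul fun p p' => by
    rw [NNReal.coe_one, one_mul]
    refine (dist_pi_le_iff dist_nonneg).2 fun i => (dist_pi_le_iff dist_nonneg).2 fun k => ?_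
    calc dist (unitClamp p i k) (unitClamp p' i k) ≤ dist (p i k) (p' i k) := by
          simpa [unitClamp, Subtype.dist_eq] using
            (LipschitzWith.projIcc zero_le_one).dist_le_mul (p i k) (p' i k)
      _ ≤ dist p p' := (dist_le_pi_dist (p i) (p' i) k).trans (dist_le_pi_dist p p' i)

theorem unitClamp_mem_Icc (p : ι → κ → ℝ) : unitClamp p ∈ Icc 0 1 :=
  ⟨fun i k => (projIcc 0 1 zero_le_one (p i k)).2.1,
    fun i k => (projIcc 0 1 zero_le_one (p i k)).2.2⟩

theorem unitClamp_apply_of_nonpos {p : ι → κ → ℝ} {i : ι} {k : κ} (h : p i k ≤ 0) :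
    unitClamp p i k = 0 := by
  simp [unitClamp, projIcc_of_le_left zero_le_one h]

theorem unitClamp_eq_self_of_mem_stdSimplex [Fintype κ] {p : ι → κ → ℝ}
    (hp : ∀ i, p i ∈ stdSimplex ℝ κ) : unitClamp p = p :=
  funext fun i => funext fun k => by
    simp [unitClamp, projIcc_of_mem zero_le_one (mem_Icc_of_mem_stdSimplex (hp i) k)]

end UnitClamp

section GKEField

variable {S : Type*} [Fintype S] [DecidableEq S] {M : ℕ}
  (q : Fin M → ℝ) (W : S → S → Fin M → Fin M → ℝ) (Φ : S → S → ℝ → ℝ) (ψ : S → S → S)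

noncomputable def gkeField (p : Fin M → S → ℝ) : Fin M → S → ℝ := fun j x =>
  (∑ y ∈ Finset.univ.erase x,
      Φ y x ((1 / (M : ℝ)) * ∑ k, q k * W y x j k * p k (ψ y x)) * p j y)
    - ∑ y ∈ Finset.univ.erase x,
      Φ x y ((1 / (M : ℝ)) * ∑ k, q k * W x y j k * p k (ψ x y)) * p j x

theorem isMacroGKESolution_iff (P : ℝ → Fin M → S → ℝ) :
    IsMacroGKESolution q W Φ ψ P ↔
      ∀ t ∈ Ici (0:ℝ), HasDerivWithinAt P (gkeField q W Φ ψ (P t)) (Ici 0) t := by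
  simp only [hasDerivWithinAt_pi]
  rfl

theorem locallyLipschitz_gkeField (hΦ : ∀ x y, LocallyLipschitz (Φ x y)) :
    LocallyLipschitz (gkeField q W Φ ψ) := by
  have hcoord (j : Fin M) (x : S) : LocallyLipschitz fun p : Fin M → S → ℝ => p j x :=
    ((LipschitzWith.eval x).comp (LipschitzWith.eval j)).locallyLipschitz
  have hrate (j : Fin M) (x y : S) : LocallyLipschitz fun p : Fin M → S → ℝ =>
      Φ x y ((1 / (M : ℝ)) * ∑ k, q k * W x y j k * p k (ψ x y)) :=
    (hΦ x y).comp (ContDiff.locallyLipschitz (𝕂 := ℝ) (by fun_prop))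
  exact .pi fun j => .pi fun x =>
    (LocallyLipschitz.sum _ fun y _ => (hrate j y x).mul' (hcoord j y)).sub
      (LocallyLipschitz.sum _ fun y _ => (hrate j x y).mul' (hcoord j x))

theorem sum_gkeField_eq_zero (p : Fin M → S → ℝ) (j : Fin M) :
    ∑ x, gkeField q W Φ ψ p j x = 0 := by
  simp only [gkeField, Finset.sum_sub_distrib, sub_eq_zero]
  exact Finset.sum_comm' fun x y => by simp [ne_comm]

variable {Φ} in
theorem gkeField_apply_nonneg (hΦ : ∀ x y u, 0 ≤ Φ x y u) {p : Fin M → S → ℝ} {j : Fin M}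
    {x : S} (hp : ∀ y, 0 ≤ p j y) (hx : p j x = 0) : 0 ≤ gkeField q W Φ ψ p j x := by
  simp only [gkeField, hx, mul_zero, Finset.sum_const_zero, sub_zero]
  exact Finset.sum_nonneg fun y _ => mul_nonneg (hΦ _ _ _) (hp y)

variable {Φ} in
theorem mem_stdSimplex_of_hasDerivWithinAt_gkeField_unitClamp (hΦ : ∀ x y u, 0 ≤ Φ x y u)
    {P : ℝ → Fin M → S → ℝ}
    (hP : ∀ t ∈ Ici (0:ℝ), HasDerivWithinAt P (gkeField q W Φ ψ (unitClamp (P t))) (Ici 0) t)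
    (h0 : ∀ j, P 0 j ∈ stdSimplex ℝ S) : ∀ t ∈ Ici (0:ℝ), ∀ j, P t j ∈ stdSimplex ℝ S := by
  have hcoord (j : Fin M) (x : S) : ∀ t ∈ Ici (0:ℝ), HasDerivWithinAt (fun s => P s j x)
      (gkeField q W Φ ψ (unitClamp (P t)) j x) (Ici 0) t := fun t ht =>
    hasDerivWithinAt_pi.1 (hasDerivWithinAt_pi.1 (hP t ht) j) x
  have hmass (j : Fin M) : ∀ t ∈ Ici (0:ℝ),
      HasDerivWithinAt (fun s => ∑ x, P s j x) 0 (Ici 0) t := fun t ht => by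
    simpa only [sum_gkeField_eq_zero] using
      HasDerivWithinAt.fun_sum (u := Finset.univ) fun x _ => hcoord j x t ht
  intro t ht j
  refine ⟨fun x => nonneg_of_hasDerivWithinAt_of_neg_imp_nonneg (hcoord j x) ((h0 j).1 x)
    (fun s _ hs => gkeField_apply_nonneg q W ψ hΦ (fun y => (unitClamp_mem_Icc (P s)).1 j y)
      (unitClamp_apply_of_nonpos hs.le)) t ht, ?_⟩
  rw [← (h0 j).2]
  exact constant_of_has_deriv_right_zero
    (fun s hs => (hmass j s hs.1).continuousWithinAt.mono Icc_subset_Ici_self)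
    (fun s hs => (hmass j s hs.1).mono (Ici_subset_Ici.2 hs.1)) t ⟨ht, le_rfl⟩

end GKEField

theorem macroscale_gke_wellposed_general
    {S : Type*} [Fintype S] [DecidableEq S]
    (M : ℕ)
    (q : Fin M → ℝ)
    (W : S → S → Fin M → Fin M → ℝ)
    (Φ : S → S → ℝ → ℝ) (L : S → S → NNReal)
    (hΦlip : ∀ x y : S, LipschitzWith (L x y) (Φ x y))
    (hΦnn : ∀ (x y : S) (u : ℝ), 0 ≤ Φ x y u)
    (ψ : S → S → S)
    (P₀ : Fin M → S → ℝ)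
    (hP₀ : ∀ j : Fin M, (∀ x : S, 0 ≤ P₀ j x) ∧ ∑ x, P₀ j x = 1) :
    ∃ P : ℝ → Fin M → S → ℝ,
      (∀ (j : Fin M) (x : S), P 0 j x = P₀ j x) ∧
      IsMacroGKESolution q W Φ ψ P ∧
      (∀ t ∈ Ici (0:ℝ), ∀ j : Fin M, (∀ x : S, 0 ≤ P t j x) ∧ ∑ x, P t j x = 1) ∧
      (∀ Q : ℝ → Fin M → S → ℝ,
        (∀ (j : Fin M) (x : S), Q 0 j x = P₀ j x) →
        IsMacroGKESolution q W Φ ψ Q →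
        ∀ t ∈ Ici (0:ℝ), ∀ (j : Fin M) (x : S), Q t j x = P t j x) := by
  have hF := locallyLipschitz_gkeField q W Φ ψ fun x y => (hΦlip x y).locallyLipschitz
  obtain ⟨P, hP0, hP⟩ := hF.exists_forall_hasDerivWithinAt_Ici_comp lipschitzWith_unitClamp
    isCompact_Icc unitClamp_mem_Icc P₀
  have hPΔ : ∀ t ∈ Ici (0:ℝ), ∀ j, P t j ∈ stdSimplex ℝ S :=
    mem_stdSimplex_of_hasDerivWithinAt_gkeField_unitClamp q W ψ hΦnn hP (hP0 ▸ hP₀)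
  have hPsol : ∀ t ∈ Ici (0:ℝ), HasDerivWithinAt P (gkeField q W Φ ψ (P t)) (Ici 0) t :=
    fun t ht => unitClamp_eq_self_of_mem_stdSimplex (hPΔ t ht) ▸ hP t ht
  refine ⟨P, fun j x => by rw [hP0], (isMacroGKESolution_iff q W Φ ψ P).2 hPsol, hPΔ,
    fun Q hQ0 hQ t ht j x => ?_⟩
  have hQP := hF.eqOn_Ici_of_hasDerivWithinAt ((isMacroGKESolution_iff q W Φ ψ Q).1 hQ) hPsol
    (by rw [hP0]; exact funext fun j => funext (hQ0 j))
  exact congrFun (congrFun (hQP ht) j) x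

/-- For a finite state space, `M ≥ 1` patches with nonnegative weights
`q`, bounded interaction weights `W_{x,y}`, and Lipschitz, bounded, nonnegative rate
nonlinearities `Φ_{x,y}`, the macroscale generalized Kolmogorov equations have, for every
initial condition with each patch probability vector in the simplex `Δ`, a solution defined
for all `t ≥ 0` which keeps every `P^j(t)` in `Δ`, and any solution with the same initial
condition coincides with it for all `t ≥ 0`. -/
theorem macroscale_gke_wellposed
    {S : Type*} [Fintype S] [DecidableEq S]
    (M : ℕ) (hM : 1 ≤ M)
    (q : Fin M → ℝ) (hq : ∀ k, 0 ≤ q k)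
    (W : S → S → Fin M → Fin M → ℝ)
    (CW : ℝ) (hWbdd : ∀ (x y : S) (j k : Fin M), |W x y j k| ≤ CW)
    (Φ : S → S → ℝ → ℝ) (L : S → S → NNReal)
    (hΦlip : ∀ x y : S, LipschitzWith (L x y) (Φ x y))
    (CΦ : ℝ) (hΦbdd : ∀ (x y : S) (u : ℝ), |Φ x y u| ≤ CΦ)
    (hΦnn : ∀ (x y : S) (u : ℝ), 0 ≤ Φ x y u)
    (ψ : S → S → S)
    (P₀ : Fin M → S → ℝ)
    (hP₀ : ∀ j : Fin M, (∀ x : S, 0 ≤ P₀ j x) ∧ ∑ x, P₀ j x = 1) :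
    ∃ P : ℝ → Fin M → S → ℝ,
      (∀ (j : Fin M) (x : S), P 0 j x = P₀ j x) ∧
      IsMacroGKESolution q W Φ ψ P ∧
      (∀ t ∈ Ici (0:ℝ), ∀ j : Fin M, (∀ x : S, 0 ≤ P t j x) ∧ ∑ x, P t j x = 1) ∧
      (∀ Q : ℝ → Fin M → S → ℝ,
        (∀ (j : Fin M) (x : S), Q 0 j x = P₀ j x) →
        IsMacroGKESolution q W Φ ψ Q →
        ∀ t ∈ Ici (0:ℝ), ∀ (j : Fin M) (x : S), Q t j x = P t j x) :=
  macroscale_gke_wellposed_general M q W Φ L hΦlip hΦnn ψ P₀ hP₀
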